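/- Let n be a positive natural number. There exist a real Banach space E of dimension n and bounded linear operators A : C[0,1] → E and B : E → L¹(0,1) such that A ∘ V ∘ B is the identity map on E and ‖A‖ · ‖B‖ ≤ 2n−1. (Consequently the n-th isomorphism number of V satisfies i_n(V) ≥ 1/(2n−1).) Concretely, one may take E = ℝⁿ with norm ‖y‖ = 2|y₁| + ⋯ + 2|y_{n−1}| + |y_n|, A(f)_k = (2n−1) f((2k−1)/(2n−1)) for 1 ≤ k ≤ n, and B(y) = ∑_{k=1}^{n−1} y_k (χ_{I_{2k−1}} − χ_{I_{2k}}) + y_n χ_{I_{2n−1}}, where I_k = [(k−1)/(2n−1), k/(2n−1)]. -/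

import Mathlib

open MeasureTheory

noncomputable section

/-- The space `L¹(0,1)` of Lebesgue integrable functions on `(0,1)`. -/
abbrev L1 : Type := Lp ℝ 1 ((volume : Measure ℝ).restrict (Set.Ioo (0:ℝ) 1))

/-- The space `C[0,1]` of continuous real functions on `[0,1]` with the supremum norm. -/
abbrev C01 : Type := C(Set.Icc (0:ℝ) 1, ℝ)

/-- `V` is the Volterra operator: `(V f)(t) = ∫₀ᵗ f(s) ds` for `f ∈ L¹(0,1)`. -/
def IsVolterra (V : L1 →L[ℝ] C01) : Prop :=
  ∀ f : L1, ∀ t : Set.Icc (0:ℝ) 1,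
    V f t = ∫ s in Set.Ioo (0:ℝ) (t:ℝ), f s
      ∂((volume : Measure ℝ).restrict (Set.Ioo (0:ℝ) 1))

/-!
Split `[0,1]` into `n` intervals of length `1/n` and let `B : ℓ¹ₙ → L¹` send the `k`-th unit
vector to `n · χ` of the `k`-th interval, so `‖B‖ ≤ 1`. Then `V (B y)` is the piecewise linear
function whose value at `M/n` is `y₀ + ⋯ + y_{M-1}`, and `A f = (f(1/n), f(2/n) - f(1/n), …,
f(1) - f((n-1)/n)) ∈ ℓ¹ₙ` recovers `y`. The first coordinate of `A f` costs `‖f‖` and each of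
the other `n - 1` costs `2‖f‖`, so `‖A‖ ≤ 2n - 1`.
-/

namespace VolterraFactorization

open Set Finset

section Synthesis

variable {ι F : Type*} [Fintype ι] [SeminormedAddCommGroup F] [NormedSpace ℝ F]

theorem norm_sum_smul_le_of_norm_le_one {v : ι → F} (hv : ∀ i, ‖v i‖ ≤ 1)
    (y : PiLp 1 (fun _ : ι => ℝ)) : ‖∑ i, y i • v i‖ ≤ ‖y‖ :=
  calc ‖∑ i, y i • v i‖ ≤ ∑ i, ‖y i‖ * ‖v i‖ := norm_sum_le_of_le _ fun _ _ => norm_smul_le _ _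
    _ ≤ ∑ i, ‖y i‖ := sum_le_sum fun i _ => mul_le_of_le_one_right (norm_nonneg _) (hv i)
    _ = ‖y‖ := (PiLp.norm_eq_of_L1 y).symm

def l1Synthesis (v : ι → F) (hv : ∀ i, ‖v i‖ ≤ 1) : PiLp 1 (fun _ : ι => ℝ) →L[ℝ] F :=
  LinearMap.mkContinuous
    (Fintype.linearCombination ℝ v ∘ₗ (WithLp.linearEquiv 1 ℝ (ι → ℝ)).toLinearMap) 1
    fun y => by simpa [Fintype.linearCombination_apply] using norm_sum_smul_le_of_norm_le_one hv y

theorem l1Synthesis_apply (v : ι → F) (hv : ∀ i, ‖v i‖ ≤ 1) (y : PiLp 1 (fun _ : ι => ℝ)) :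
    l1Synthesis v hv y = ∑ i, y i • v i :=
  Fintype.linearCombination_apply ℝ v _

theorem norm_l1Synthesis_le (v : ι → F) (hv : ∀ i, ‖v i‖ ≤ 1) : ‖l1Synthesis v hv‖ ≤ 1 :=
  LinearMap.mkContinuous_norm_le _ zero_le_one _

end Synthesis

abbrev vol01 : Measure ℝ := volume.restrict (Ioo 0 1)

abbrev piece (n k : ℕ) : Set ℝ := Ioo ((k : ℝ) / n) ((k + 1) / n)

theorem piece_subset_Ioo {n k M : ℕ} (hkM : k + 1 ≤ M) : piece n k ⊆ Ioo 0 ((M : ℝ) / n) :=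
  Ioo_subset_Ioo (by positivity) (div_le_div_of_nonneg_right (by exact_mod_cast hkM) n.cast_nonneg)

theorem disjoint_piece_Ioo {n k M : ℕ} (hMk : M ≤ k) : Disjoint (piece n k) (Ioo 0 ((M : ℝ) / n)) :=
  Set.disjoint_left.2 fun _ hx hx' =>
    (hx.1.trans hx'.2).not_ge
      (div_le_div_of_nonneg_right (by exact_mod_cast hMk : (M : ℝ) ≤ k) n.cast_nonneg)

theorem vol01_real_piece {n k : ℕ} (hk : k < n) : vol01.real (piece n k) = 1 / n := by
  have hn : (n : ℝ) ≠ 0 := Nat.cast_ne_zero.2 (by omega)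
  have hsub : piece n k ⊆ Ioo 0 1 := by simpa [hn] using piece_subset_Ioo (n := n) hk
  rw [measureReal_restrict_apply measurableSet_Ioo, inter_eq_left.2 hsub,
    Real.volume_real_Ioo_of_le (by gcongr; linarith)]
  ring

def bump (n k : ℕ) : L1 :=
  indicatorConstLp 1 measurableSet_Ioo
    ((Measure.restrict_apply_le _ (piece n k)).trans_lt measure_Ioo_lt_top).ne (n : ℝ)

theorem norm_bump {n k : ℕ} (hk : k < n) : ‖bump n k‖ = 1 := by
  rw [bump, norm_indicatorConstLp one_ne_zero ENNReal.one_ne_top, vol01_real_piece hk]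
  have hn : (n : ℝ) ≠ 0 := Nat.cast_ne_zero.2 (by omega)
  simp [hn]

theorem setIntegral_bump {n k : ℕ} (hk : k < n) (M : ℕ) :
    ∫ s in Ioo 0 ((M : ℝ) / n), bump n k s ∂vol01 = if k < M then 1 else 0 := by
  rw [bump, setIntegral_indicatorConstLp measurableSet_Ioo]
  split_ifs with hkM
  · rw [inter_eq_left.2 (piece_subset_Ioo hkM), vol01_real_piece hk]
    have hn : (n : ℝ) ≠ 0 := Nat.cast_ne_zero.2 (by omega)
    simp [hn]
  · simp [(disjoint_piece_Ioo (not_lt.1 hkM)).inter_eq]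

def bumpSynthesis (n : ℕ) : PiLp 1 (fun _ : Fin n => ℝ) →L[ℝ] L1 :=
  l1Synthesis (fun k : Fin n => bump n k) fun k => (norm_bump k.2).le

def node (n M : ℕ) : Icc (0 : ℝ) 1 := projIcc 0 1 zero_le_one ((M : ℝ) / n)

theorem coe_node {n M : ℕ} (hM : M ≤ n) : (node n M : ℝ) = M / n := by
  rw [node, projIcc_of_mem]
  rcases M.eq_zero_or_pos with rfl | hM0
  · simp
  · exact ⟨by positivity, div_le_one_of_le₀ (by exact_mod_cast hM) n.cast_nonneg⟩

def sampleDiff (n : ℕ) : C01 →L[ℝ] PiLp 1 (fun _ : Fin n => ℝ) :=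
  (PiLp.continuousLinearEquiv 1 ℝ fun _ : Fin n => ℝ).symm.toContinuousLinearMap.comp <|
    ContinuousLinearMap.pi fun k : Fin n =>
      ContinuousMap.evalCLM ℝ (node n (k + 1)) -
        if (k : ℕ) = 0 then 0 else ContinuousMap.evalCLM ℝ (node n k)

theorem sampleDiff_apply (n : ℕ) (f : C01) (k : Fin n) :
    sampleDiff n f k = f (node n (k + 1)) - if (k : ℕ) = 0 then 0 else f (node n k) := by
  split_ifs <;> simp [sampleDiff, *]

theorem norm_sampleDiff_apply_le (n : ℕ) (f : C01) (k : Fin n) :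
    ‖sampleDiff n f k‖ ≤ (if (k : ℕ) = 0 then 1 else 2) * ‖f‖ := by
  rw [sampleDiff_apply]
  split_ifs
  · simpa using f.norm_coe_le_norm _
  · linarith [norm_sub_le (f (node n (k + 1))) (f (node n k)), f.norm_coe_le_norm (node n (k + 1)),
      f.norm_coe_le_norm (node n k)]

theorem norm_sampleDiff_le {n : ℕ} (hn : 1 ≤ n) : ‖sampleDiff n‖ ≤ 2 * n - 1 := by
  obtain ⟨m, rfl⟩ := Nat.exists_eq_add_of_le' hn
  have weights : ∑ k : Fin (m + 1), (if (k : ℕ) = 0 then (1 : ℝ) else 2) = 2 * (m + 1 : ℕ) - 1 := by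
    simp [Fin.sum_univ_succ]
    ring
  refine ContinuousLinearMap.opNorm_le_bound _ (by push_cast; linarith) fun f => ?_
  rw [PiLp.norm_eq_of_L1, ← weights, sum_mul]
  exact sum_le_sum fun k _ => norm_sampleDiff_apply_le _ f k

theorem sampleDiff_apply_of_node_zero {n : ℕ} {f : C01} (hf : f (node n 0) = 0) (k : Fin n) :
    sampleDiff n f k = f (node n (k + 1)) - f (node n k) := by
  rw [sampleDiff_apply]
  split_ifs with hk
  · rw [hk, hf]
  · rfl

theorem sum_ite_lt_succ_sub_sum_ite_lt {n : ℕ} {M : Type*} [AddCommGroup M] (y : Fin n → M)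
    (k : Fin n) :
    ((∑ j : Fin n, if (j : ℕ) < k + 1 then y j else 0) -
      ∑ j : Fin n, if (j : ℕ) < k then y j else 0) = y k := by
  rw [← sum_sub_distrib]
  have h : ∀ j : Fin n, ((if (j : ℕ) < k + 1 then y j else 0) - if (j : ℕ) < k then y j else 0)
      = if j = k then y j else 0 := by
    intro j
    simp only [Fin.ext_iff]
    split_ifs <;> first | omega | simp
  simp only [h, sum_ite_eq', Finset.mem_univ, if_true]

end VolterraFactorization

namespace IsVolterra

open VolterraFactorization

variable {V : L1 →L[ℝ] C01}

theorem apply_node_zero (hV : IsVolterra V) (n : ℕ) (f : L1) : V f (node n 0) = 0 := by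
  rw [hV, coe_node n.zero_le]
  simp

theorem apply_bump_node (hV : IsVolterra V) {n k M : ℕ} (hk : k < n) (hM : M ≤ n) :
    V (bump n k) (node n M) = if k < M then 1 else 0 := by
  rw [hV, coe_node hM, setIntegral_bump hk]

theorem apply_bumpSynthesis_node (hV : IsVolterra V) {n M : ℕ} (hM : M ≤ n)
    (y : PiLp 1 (fun _ : Fin n => ℝ)) :
    V (bumpSynthesis n y) (node n M) = ∑ j : Fin n, if (j : ℕ) < M then y j else 0 := by
  simp only [bumpSynthesis, l1Synthesis_apply, map_sum, map_smul, ContinuousMap.sum_apply,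
    ContinuousMap.smul_apply, hV.apply_bump_node _ hM, Fin.is_lt, smul_eq_mul, mul_ite, mul_one,
    mul_zero]

theorem sampleDiff_comp_bumpSynthesis (hV : IsVolterra V) (n : ℕ) :
    (sampleDiff n).comp (V.comp (bumpSynthesis n)) = ContinuousLinearMap.id ℝ _ := by
  ext y k
  simp only [ContinuousLinearMap.comp_apply, ContinuousLinearMap.id_apply]
  rw [sampleDiff_apply_of_node_zero (hV.apply_node_zero n _), hV.apply_bumpSynthesis_node k.2,
    hV.apply_bumpSynthesis_node k.2.le, sum_ite_lt_succ_sub_sum_ite_lt]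

end IsVolterra

open VolterraFactorization in
/-- Lower bound for the isomorphism numbers of the Volterra operator: there exist an
`n`-dimensional Banach space `E` and bounded operators `A : C[0,1] → E`, `B : E → L¹(0,1)`
with `A ∘ V ∘ B = id_E` and `‖A‖ ⬝ ‖B‖ ≤ 2n - 1`. -/
theorem isomorphism_factorization_volterra (n : ℕ) (hn : 1 ≤ n)
    (V : L1 →L[ℝ] C01) (hV : IsVolterra V) :
    ∃ (E : Type) (_ : NormedAddCommGroup E) (_ : NormedSpace ℝ E) (_ : CompleteSpace E),
      Module.finrank ℝ E = n ∧
      ∃ (A : C01 →L[ℝ] E) (B : E →L[ℝ] L1),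
        A.comp (V.comp B) = ContinuousLinearMap.id ℝ E ∧ ‖A‖ * ‖B‖ ≤ 2 * n - 1 := by
  refine ⟨PiLp 1 (fun _ : Fin n => ℝ), inferInstance, inferInstance, inferInstance,
    (WithLp.linearEquiv 1 ℝ (Fin n → ℝ)).finrank_eq.trans (by simp), sampleDiff n,
    bumpSynthesis n, hV.sampleDiff_comp_bumpSynthesis n, ?_⟩
  calc ‖sampleDiff n‖ * ‖bumpSynthesis n‖ ≤ ‖sampleDiff n‖ :=
        mul_le_of_le_one_right (norm_nonneg (sampleDiff n)) (norm_l1Synthesis_le _ _)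
    _ ≤ 2 * n - 1 := norm_sampleDiff_le hn
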